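/- No finite graph attains the minimum 4-cycle density among graphs of edge density at least 1/2: for every finite simple graph G with at least one vertex, if t(K₂, G) ≥ 1/2 then t(C₄, G) > 1/16. -/

import Mathlib

/-! With `c(u, v)` the number of common neighbours and `d(v)` the degree, `hom(C₄, G) = ∑ c(u, v)²`,
`hom(K₂, G) = ∑ d(v)` and, counting paths `u - w - v` by their middle vertex, `∑ c(u, v) = ∑ d(w)²`.
Expanding around `n/4` gives `∑ c² = ∑ (c - n/4)² + (n/2) ∑ d² - n⁴/16`, and Cauchy–Schwarz with
`∑ d ≥ n²/2` gives `(n/2) ∑ d² ≥ n⁴/8`, so `hom(C₄, G) ≥ n⁴/16`. The inequality is strict because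
the diagonal terms `(c(v, v) - n/4)² = (d(v) - n/4)²` cannot all vanish when the average degree is
at least `n/2`. -/

open MeasureTheory

attribute [local instance] MeasureTheory.Measure.Subtype.measureSpace

noncomputable section

/-- The unit interval `[0,1]` as a measure space (with Lebesgue measure). -/
abbrev unitI : Type := Set.Icc (0 : ℝ) 1

/-- A (labeled) graphon: a symmetric, measurable function `[0,1]² → [0,1]`. -/
structure Graphon where
  toFun : unitI → unitI → ℝ
  measurable' : Measurable (Function.uncurry toFun)
  symm' : ∀ x y, toFun x y = toFun y x
  nonneg' : ∀ x y, 0 ≤ toFun x y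
  le_one' : ∀ x y, toFun x y ≤ 1

/-- The cut distance between two (labeled) graphons: the infimum, over pairs of invertible
measure-preserving re-labelings `φ, ψ` of `[0,1]`, of the supremum over measurable sets
`S, T ⊆ [0,1]` of `|∫_{S×T} (W(φx,φy) - U(ψx,ψy))|`. -/
def cutDist (W U : Graphon) : ℝ :=
  ⨅ p : {p : (unitI ≃ᵐ unitI) × (unitI ≃ᵐ unitI) //
      MeasurePreserving p.1 volume volume ∧ MeasurePreserving p.2 volume volume},
    ⨆ ST : {ST : Set unitI × Set unitI // MeasurableSet ST.1 ∧ MeasurableSet ST.2},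
      |∫ q in ST.1.1 ×ˢ ST.1.2,
        (W.toFun (p.1.1 q.1) (p.1.1 q.2) - U.toFun (p.1.2 q.1) (p.1.2 q.2))|

/-- The index in `Fin n` of the pixel containing `x ∈ [0,1]`; for `x ∈ ((i-1)/n, i/n]`
this is `⌈n x⌉ - 1 = i - 1`, corresponding to the vertex labeled `i` in `{1, …, n}`. -/
def pixelIdx (n : ℕ) (hn : 0 < n) (x : unitI) : Fin n :=
  ⟨min (n - 1) (⌈(n : ℝ) * x.1⌉₊ - 1), lt_of_le_of_lt (min_le_left _ _) (Nat.sub_lt hn one_pos)⟩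

lemma measurable_pixelIdx (n : ℕ) (hn : 0 < n) : Measurable (pixelIdx n hn) := by
  have h1 : Measurable fun x : unitI => ⌈(n : ℝ) * x.1⌉₊ :=
    (Nat.measurable_ceil.comp (measurable_const.mul measurable_subtype_coe))
  exact (measurable_from_top (f := fun m : ℕ =>
    (⟨min (n - 1) (m - 1), lt_of_le_of_lt (min_le_left _ _) (Nat.sub_lt hn one_pos)⟩ : Fin n))).comp h1

open scoped Classical in
/-- The pixel graphon of a finite simple graph `G` on vertex set `Fin n`. -/
def pixelGraphon {n : ℕ} (hn : 0 < n) (G : SimpleGraph (Fin n)) : Graphon where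
  toFun x y := if G.Adj (pixelIdx n hn x) (pixelIdx n hn y) then 1 else 0
  measurable' := by
    apply Measurable.ite _ measurable_const measurable_const
    have : Measurable fun q : unitI × unitI => (pixelIdx n hn q.1, pixelIdx n hn q.2) :=
      ((measurable_pixelIdx n hn).comp measurable_fst).prodMk
        ((measurable_pixelIdx n hn).comp measurable_snd)
    exact this ((Set.toFinite {q : Fin n × Fin n | G.Adj q.1 q.2}).measurableSet)
  symm' := by
    intro x y
    simp only [SimpleGraph.adj_comm]
  nonneg' := by intro x y; (try simp only []); split <;> norm_num
  le_one' := by intro x y; (try simp only []); split <;> norm_num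

open scoped Classical in
/-- The homomorphism density `t(H, W)` of a finite simple graph `H` in a graphon `W`. -/
def homDensityG {k : ℕ} (H : SimpleGraph (Fin k)) (W : Graphon) : ℝ :=
  ∫ x : Fin k → unitI, ∏ e ∈ H.edgeFinset,
    Sym2.lift ⟨fun i j => W.toFun (x i) (x j), fun i j => W.symm' (x i) (x j)⟩ e

/-- The number of graph homomorphisms from `H` to `G`. -/
def homCount {k n : ℕ} (H : SimpleGraph (Fin k)) (G : SimpleGraph (Fin n)) : ℕ :=
  Nat.card (H →g G)

/-- The homomorphism density `t(H, G) = hom(H, G) / n ^ k` of `H` in a graph `G` on `n` vertices. -/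
def homDensity {k n : ℕ} (H : SimpleGraph (Fin k)) (G : SimpleGraph (Fin n)) : ℝ :=
  (homCount H G : ℝ) / (n : ℝ) ^ k

/-- The 4-cycle `C₄`. -/
def C4 : SimpleGraph (Fin 4) := SimpleGraph.cycleGraph 4

/-- The single edge `K₂`. -/
def K2 : SimpleGraph (Fin 2) := ⊤

theorem Finset.sum_diag_le_sum_sum {ι M : Type*} [Fintype ι] [AddCommMonoid M] [PartialOrder M]
    [IsOrderedAddMonoid M] {f : ι → ι → M} (hf : ∀ i j, 0 ≤ f i j) :
    ∑ i, f i i ≤ ∑ i, ∑ j, f i j :=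
  Finset.sum_le_sum fun i _ => Finset.single_le_sum (fun j _ => hf i j) (Finset.mem_univ i)

namespace SimpleGraph

variable {V : Type*} (G : SimpleGraph V)

def cycleGraphFourHomEquiv :
    (cycleGraph 4 →g G) ≃ Σ p : V × V, G.commonNeighbors p.1 p.2 × G.commonNeighbors p.1 p.2 where
  toFun f := ⟨(f 0, f 2),
    ⟨f 1, f.map_rel (by decide), (f.map_rel (by decide) : G.Adj (f 1) (f 2)).symm⟩,
    ⟨f 3, (f.map_rel (by decide) : G.Adj (f 3) (f 0)).symm, f.map_rel (by decide)⟩⟩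
  invFun p := ⟨![p.1.1, p.2.1, p.1.2, p.2.2], by
    obtain ⟨⟨u, v⟩, ⟨w, hw⟩, ⟨x, hx⟩⟩ := p
    rw [mem_commonNeighbors] at hw hx
    intro a b hab
    fin_cases a <;> fin_cases b <;> first
      | exact absurd hab (by decide)
      | simp_all [adj_comm]⟩
  left_inv f := by ext i; fin_cases i <;> rfl
  right_inv _ := rfl

def topFinTwoHomEquivDart : ((⊤ : SimpleGraph (Fin 2)) →g G) ≃ G.Dart where
  toFun f := ⟨(f 0, f 1), f.map_rel (by decide)⟩
  invFun d := ⟨![d.fst, d.snd], by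
    intro a b hab
    fin_cases a <;> fin_cases b <;> simp_all [d.adj, d.adj.symm]⟩
  left_inv f := by ext i; fin_cases i <;> rfl
  right_inv _ := rfl

def sigmaCommonNeighborsEquiv :
    (Σ p : V × V, G.commonNeighbors p.1 p.2) ≃ Σ w : V, G.neighborSet w × G.neighborSet w where
  toFun q := ⟨q.2, ⟨q.1.1, q.2.2.1.symm⟩, ⟨q.1.2, q.2.2.2.symm⟩⟩
  invFun q := ⟨(q.2.1, q.2.2), q.1, q.2.1.2.symm, q.2.2.2.symm⟩
  left_inv _ := rfl
  right_inv _ := rfl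

variable [Fintype V] [DecidableRel G.Adj]

theorem card_cycleGraph_four_hom :
    Nat.card (cycleGraph 4 →g G) = ∑ u, ∑ v, Fintype.card (G.commonNeighbors u v) ^ 2 := by
  rw [Nat.card_congr G.cycleGraphFourHomEquiv, Nat.card_eq_fintype_card, Fintype.card_sigma,
    Fintype.sum_prod_type]
  simp only [Fintype.card_prod, sq]

theorem card_top_fin_two_hom :
    Nat.card ((⊤ : SimpleGraph (Fin 2)) →g G) = ∑ v, G.degree v := by
  rw [Nat.card_congr G.topFinTwoHomEquivDart, Nat.card_eq_fintype_card, dart_card_eq_sum_degrees]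

theorem sum_card_commonNeighbors :
    ∑ u, ∑ v, Fintype.card (G.commonNeighbors u v) = ∑ w, G.degree w ^ 2 := by
  have := Fintype.card_congr G.sigmaCommonNeighborsEquiv
  simp only [Fintype.card_sigma, Fintype.card_prod, card_neighborSet_eq_degree] at this
  rw [← Fintype.sum_prod_type', this]
  simp only [sq]

theorem card_commonNeighbors_self (v : V) :
    Fintype.card (G.commonNeighbors v v) = G.degree v := by
  simp only [← card_neighborSet_eq_degree, commonNeighbors_eq, Set.inter_self]

open Finset in
theorem card_pow_four_lt_sixteen_mul_sum_sq_card_commonNeighbors [Nonempty V]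
    (h : Fintype.card V ^ 2 ≤ 2 * ∑ v, G.degree v) :
    Fintype.card V ^ 4 < 16 * ∑ u, ∑ v, Fintype.card (G.commonNeighbors u v) ^ 2 := by
  rw [← Nat.cast_lt (α := ℝ)]
  push_cast
  set N : ℝ := (Fintype.card V : ℝ) with hN_def
  set c : V → V → ℝ := fun u v => (Fintype.card (G.commonNeighbors u v) : ℝ)
  set d : V → ℝ := fun v => (G.degree v : ℝ)
  have hN : 0 < N := by positivity
  have hdeg : N ^ 2 / 2 ≤ ∑ v, d v := by
    have : N ^ 2 ≤ 2 * ∑ v, d v := by simp only [N, d]; exact_mod_cast h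
    linarith
  have hsum : ∑ u, ∑ v, c u v = ∑ v, d v ^ 2 := by
    simp only [c, d]; exact_mod_cast G.sum_card_commonNeighbors
  have hexpand : ∑ u, ∑ v, (c u v - N / 4) ^ 2 =
      ∑ u, ∑ v, c u v ^ 2 - N / 2 * ∑ v, d v ^ 2 + N ^ 4 / 16 := by
    simp only [sub_sq, sum_add_distrib, sum_sub_distrib, ← mul_sum, ← sum_mul, hsum]
    simp only [sum_const, card_univ, nsmul_eq_mul, ← hN_def]
    ring
  have hdiag : ∑ v, (d v - N / 4) ^ 2 ≤ ∑ u, ∑ v, (c u v - N / 4) ^ 2 := by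
    simpa only [c, d, card_commonNeighbors_self] using
      sum_diag_le_sum_sum fun u v => sq_nonneg (c u v - N / 4)
  have hcs : (N ^ 2 / 2) ^ 2 ≤ N * ∑ v, d v ^ 2 :=
    (pow_le_pow_left₀ (by positivity) hdeg 2).trans sq_sum_le_card_mul_sum_sq
  obtain ⟨w, -, hw⟩ : ∃ w ∈ univ, N / 4 < d w := by
    refine exists_lt_of_sum_lt ?_
    simp only [sum_const, card_univ, nsmul_eq_mul]
    nlinarith
  have hpos : 0 < ∑ v, (d v - N / 4) ^ 2 :=
    (pow_pos (sub_pos.2 hw) 2).trans_le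
      (single_le_sum (fun v _ => sq_nonneg (d v - N / 4)) (mem_univ w))
  linarith

end SimpleGraph

/-- No finite graph attains the minimum 4-cycle density among graphs of edge density at
least `1/2`: if `t(K₂, G) ≥ 1/2` then `t(C₄, G) > 1/16`. -/
theorem no_finite_graph_attains_min {n : ℕ} (hn : 0 < n) (G : SimpleGraph (Fin n))
    (h : homDensity K2 G ≥ 1/2) :
    homDensity C4 G > 1/16 := by
  classical
  have : NeZero n := ⟨hn.ne'⟩
  have hn' : (0 : ℝ) < n := by exact_mod_cast hn
  rw [homDensity, homCount, K2, G.card_top_fin_two_hom, ge_iff_le,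
    le_div_iff₀ (by positivity)] at h
  rw [homDensity, homCount, C4, G.card_cycleGraph_four_hom, gt_iff_lt,
    lt_div_iff₀ (by positivity)]
  have hdeg : n ^ 2 ≤ 2 * ∑ v, G.degree v := by
    exact_mod_cast (by linarith : (n : ℝ) ^ 2 ≤ 2 * ((∑ v, G.degree v : ℕ) : ℝ))
  have hC4 := G.card_pow_four_lt_sixteen_mul_sum_sq_card_commonNeighbors
    (by rwa [Fintype.card_fin])
  rw [Fintype.card_fin] at hC4
  have : (n : ℝ) ^ 4 < 16 * ((∑ u, ∑ v, Fintype.card (G.commonNeighbors u v) ^ 2 : ℕ) : ℝ) := by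
    exact_mod_cast hC4
  linarith
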